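/- Weight accuracy in smooth regions (Proposition): let r ≥ 2, t = 2r−1, and L ≥ 0. There exists a constant M > 0, depending only on r and L, such that for every 0 < h ≤ 1, every x₀ ∈ ℝ, every integer j, and every f : ℝ → ℝ satisfying |f(x_{j+ξ}) − f(x_{j+ξ−1})| ≤ L·h for all −r+1 ≤ ξ ≤ r−1, the nonlinear weights satisfy |ω_k − C^{2r-1}_{r-1,k}| ≤ M·h^{t} for every 0 ≤ k ≤ r−1. -/

import Mathlib

/-- The node `x_m = x₀ + m·h`. -/
noncomputable def nd (h x₀ : ℝ) (m : ℤ) : ℝ := x₀ + (m : ℝ) * h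

/-- Value at the midpoint `x₀ + (j - 1/2)·h` of the Lagrange interpolant of `f`
at the `a+1` equally spaced nodes `x_{j+b-a}, …, x_{j+b}` where `x_m = x₀ + m·h`. -/
noncomputable def Pval (h x₀ : ℝ) (j a b : ℤ) (f : ℝ → ℝ) : ℝ :=
  (Lagrange.interpolate (Finset.Icc (j + b - a) (j + b)) (fun m : ℤ => x₀ + (m : ℝ) * h)
    (fun m : ℤ => f (x₀ + (m : ℝ) * h))).eval (x₀ + ((j : ℝ) - 1 / 2) * h)

/-- The classical optimal weights `C^{2r-1}_{r-1,k} = 2^{-(2r-1)} · C(2r, 2k+1)`. -/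
noncomputable def Copt (r k : ℕ) : ℝ :=
  (1 / 2 ^ (2 * r - 1)) * (Nat.choose (2 * r) (2 * k + 1) : ℝ)

/-- The general optimal weights `C^{r+l-1}_{l-1,k}`, for `1 ≤ l ≤ r` and `0 ≤ k ≤ l-1`. -/
noncomputable def C1 (r l k : ℕ) : ℝ :=
  (1 / 2 ^ (2 * l)) * (((r : ℝ) + (l : ℝ)) / (l : ℝ)) *
    (((l : ℝ) - (k : ℝ)) / ((r : ℝ) - (k : ℝ))) *
    (Nat.choose l k : ℝ) * ((Nat.choose r k : ℝ))⁻¹ * (Nat.choose (2 * l) l : ℝ) *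
    ((Nat.choose (l + r) r : ℝ))⁻¹ * (Nat.choose (2 * r) (2 * k + 1) : ℝ)

/-- The smoothness indicators `J_ξ = |f(x_{j+ξ}) − f(x_{j+ξ-1})|^{2t}` with `t = 2r-1`. -/
noncomputable def Jf (h x₀ : ℝ) (j : ℤ) (r : ℕ) (f : ℝ → ℝ) (ξ : ℤ) : ℝ :=
  |f (nd h x₀ (j + ξ)) - f (nd h x₀ (j + ξ - 1))| ^ (2 * (2 * r - 1))

/-- The nonlinear weight numerators
`α_k = C^{2r-1}_{r-1,k} + h^{-(2r-1)}·(Σ_{l=k+1}^{r-1} C^{r+l-1}_{l-1,k} J_l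
  + Σ_{l=0}^{k-1} C^{2r-l-2}_{r-1,k} J_{l-r+1})`,
where the reflected weight `C^{2r-l-2}_{r-1,k}` equals `C1 r (r-l-1) (r-1-k)`. -/
noncomputable def alphaW (h x₀ : ℝ) (j : ℤ) (r : ℕ) (f : ℝ → ℝ) (k : ℕ) : ℝ :=
  Copt r k + (h ^ (2 * r - 1))⁻¹ *
    ((∑ l ∈ Finset.Icc (k + 1) (r - 1), C1 r l k * Jf h x₀ j r f (l : ℤ)) +
      ∑ l ∈ Finset.range k, C1 r (r - l - 1) (r - 1 - k) * Jf h x₀ j r f ((l : ℤ) - (r : ℤ) + 1))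

/-- The nonlinear weights `ω_k = α_k / (α_0 + ⋯ + α_{r-1})`. -/
noncomputable def omegaW (h x₀ : ℝ) (j : ℤ) (r : ℕ) (f : ℝ → ℝ) (k : ℕ) : ℝ :=
  alphaW h x₀ j r f k / ∑ i ∈ Finset.range r, alphaW h x₀ j r f i

/-! Write `α_k = C_k + e_k` with `C_k = C^{2r-1}_{r-1,k}`. Each indicator is at most `(L h)^{2t}`,
so after the factor `h^{-t}` the perturbations satisfy `0 ≤ e_k = O(h^t)`. The optimal weights sum
to `1` (the odd binomial coefficients of `2r` add up to `2^{2r-1}`), hence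
`ω_k - C_k = (e_k - C_k Σ e) / (1 + Σ e)`, whose absolute value is at most `Σ e = O(h^t)`. -/

open Finset

theorem Finset.sum_range_two_mul {M : Type*} [AddCommMonoid M] (f : ℕ → M) (n : ℕ) :
    ∑ i ∈ range (2 * n), f i = ∑ k ∈ range n, (f (2 * k) + f (2 * k + 1)) := by
  induction n with
  | zero => simp
  | succ n ih =>
    rw [mul_add, mul_one, sum_range_succ, sum_range_succ, sum_range_succ, ih, add_assoc]

theorem Nat.sum_range_choose_odd {r : ℕ} (hr : 0 < r) :
    ∑ k ∈ range r, (2 * r).choose (2 * k + 1) = 2 ^ (2 * r - 1) := by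
  obtain ⟨m, rfl⟩ := Nat.exists_eq_add_of_lt hr
  -- Pascal's rule: `C(2m+2, 2k+1) = C(2m+1, 2k) + C(2m+1, 2k+1)`, which covers row `2m+1`.
  rw [zero_add, show 2 * (m + 1) = 2 * m + 1 + 1 by ring,
    sum_congr rfl fun k _ => Nat.choose_succ_succ' (2 * m + 1) (2 * k),
    ← sum_range_two_mul (fun i => (2 * m + 1).choose i), show 2 * (m + 1) = 2 * m + 1 + 1 by ring,
    Nat.sum_range_choose, Nat.add_sub_cancel]

theorem sum_Copt {r : ℕ} (hr : 0 < r) : ∑ k ∈ range r, Copt r k = 1 := by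
  have h := congrArg (Nat.cast : ℕ → ℝ) (Nat.sum_range_choose_odd hr)
  push_cast at h
  simp only [Copt]
  rw [← mul_sum, h]
  simp

theorem Copt_nonneg (r k : ℕ) : 0 ≤ Copt r k := by
  unfold Copt
  positivity

theorem C1_nonneg {r l k : ℕ} (hkl : k < l) (hlr : l ≤ r) : 0 ≤ C1 r l k := by
  have hk_l : (k : ℝ) ≤ l := by exact_mod_cast hkl.le
  have hk_r : (k : ℝ) ≤ r := by exact_mod_cast hkl.le.trans hlr
  have : 0 ≤ ((l : ℝ) - k) / ((r : ℝ) - k) := div_nonneg (by linarith) (by linarith)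
  unfold C1
  positivity

theorem abs_div_sum_add_sub_le {ι : Type*} {s : Finset ι} {c e : ι → ℝ}
    (hc : ∀ i ∈ s, 0 ≤ c i) (hc1 : ∑ i ∈ s, c i = 1) (he : ∀ i ∈ s, 0 ≤ e i)
    {k : ι} (hk : k ∈ s) :
    |(c k + e k) / ∑ i ∈ s, (c i + e i) - c k| ≤ ∑ i ∈ s, e i := by
  set E := ∑ i ∈ s, e i
  have hE : 0 ≤ E := sum_nonneg he
  have hek : e k ≤ E := single_le_sum he hk
  have hck : c k ≤ 1 := hc1 ▸ single_le_sum hc hk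
  have hck0 := hc k hk
  have hek0 := he k hk
  rw [sum_add_distrib, hc1,
    show (c k + e k) / (1 + E) - c k = (e k - c k * E) / (1 + E) by field_simp; ring,
    abs_div, abs_of_pos (show 0 < 1 + E by linarith)]
  calc |e k - c k * E| / (1 + E) ≤ |e k - c k * E| := div_le_self (abs_nonneg _) (by linarith)
    _ ≤ E := abs_sub_le_iff.2 ⟨by nlinarith, by nlinarith⟩

theorem sum_mul_mem_Icc {ι : Type*} {s : Finset ι} {c g : ι → ℝ} {D : ℝ}
    (hc : ∀ i ∈ s, 0 ≤ c i) (hg : ∀ i ∈ s, g i ∈ Set.Icc 0 D) :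
    ∑ i ∈ s, c i * g i ∈ Set.Icc 0 ((∑ i ∈ s, c i) * D) :=
  ⟨sum_nonneg fun i hi => mul_nonneg (hc i hi) (hg i hi).1,
    sum_mul s c D ▸ sum_le_sum fun i hi => mul_le_mul_of_nonneg_left (hg i hi).2 (hc i hi)⟩

theorem Jf_mem_Icc {h x₀ L : ℝ} {j ξ : ℤ} {r : ℕ} {f : ℝ → ℝ}
    (hξ : |f (nd h x₀ (j + ξ)) - f (nd h x₀ (j + ξ - 1))| ≤ L * h) :
    Jf h x₀ j r f ξ ∈ Set.Icc 0 ((L * h) ^ (2 * (2 * r - 1))) :=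
  ⟨by unfold Jf; positivity, pow_le_pow_left₀ (abs_nonneg _) hξ _⟩

noncomputable def alphaCoeffSum (r k : ℕ) : ℝ :=
  ∑ l ∈ Icc (k + 1) (r - 1), C1 r l k + ∑ l ∈ range k, C1 r (r - l - 1) (r - 1 - k)

theorem alphaCoeffSum_nonneg {r k : ℕ} (hk : k < r) : 0 ≤ alphaCoeffSum r k :=
  add_nonneg
    (sum_nonneg fun l hl => by rw [mem_Icc] at hl; exact C1_nonneg (by omega) (by omega))
    (sum_nonneg fun l hl => by rw [mem_range] at hl; exact C1_nonneg (by omega) (by omega))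

theorem alphaW_sub_Copt_mem_Icc {h x₀ L : ℝ} {j : ℤ} {r : ℕ} {f : ℝ → ℝ} (hh : 0 < h)
    (hf : ∀ ξ : ℤ, -(r : ℤ) + 1 ≤ ξ → ξ ≤ (r : ℤ) - 1 →
      |f (nd h x₀ (j + ξ)) - f (nd h x₀ (j + ξ - 1))| ≤ L * h) {k : ℕ} (hk : k < r) :
    alphaW h x₀ j r f k - Copt r k ∈
      Set.Icc 0 (alphaCoeffSum r k * L ^ (2 * (2 * r - 1)) * h ^ (2 * r - 1)) := by
  set t := 2 * r - 1
  have right := sum_mul_mem_Icc (s := Icc (k + 1) (r - 1)) (c := fun l => C1 r l k)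
    (g := fun l => Jf h x₀ j r f l) (D := (L * h) ^ (2 * t))
    (fun l hl => by rw [mem_Icc] at hl; exact C1_nonneg (by omega) (by omega))
    (fun l hl => by rw [mem_Icc] at hl; exact Jf_mem_Icc (hf _ (by omega) (by omega)))
  have left := sum_mul_mem_Icc (s := range k) (c := fun l => C1 r (r - l - 1) (r - 1 - k))
    (g := fun l => Jf h x₀ j r f ((l : ℤ) - r + 1)) (D := (L * h) ^ (2 * t))
    (fun l hl => by rw [mem_range] at hl; exact C1_nonneg (by omega) (by omega))
    (fun l hl => by rw [mem_range] at hl; exact Jf_mem_Icc (hf _ (by omega) (by omega)))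
  have hht : 0 < h ^ t := pow_pos hh t
  rw [alphaW, add_sub_cancel_left]
  refine ⟨mul_nonneg (inv_nonneg.2 hht.le) (add_nonneg right.1 left.1), ?_⟩
  calc _ ≤ (h ^ t)⁻¹ * (alphaCoeffSum r k * (L * h) ^ (2 * t)) := by
        rw [alphaCoeffSum, add_mul]
        exact mul_le_mul_of_nonneg_left (add_le_add right.2 left.2) (inv_nonneg.2 hht.le)
    _ = alphaCoeffSum r k * L ^ (2 * t) * h ^ t := by
        rw [mul_pow, two_mul t, pow_add h]
        field_simp

theorem weights_smooth_accuracy_general (r : ℕ) (L : ℝ) :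
    ∃ M > 0, ∀ h : ℝ, 0 < h → h ≤ 1 → ∀ x₀ : ℝ, ∀ j : ℤ, ∀ f : ℝ → ℝ,
      (∀ ξ : ℤ, -(r : ℤ) + 1 ≤ ξ → ξ ≤ (r : ℤ) - 1 →
        |f (nd h x₀ (j + ξ)) - f (nd h x₀ (j + ξ - 1))| ≤ L * h) →
      ∀ k < r, |omegaW h x₀ j r f k - Copt r k| ≤ M * h ^ (2 * r - 1) := by
  set B := ∑ i ∈ range r, alphaCoeffSum r i
  have hB : 0 ≤ B := sum_nonneg fun i hi => alphaCoeffSum_nonneg (mem_range.1 hi)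
  refine ⟨B * L ^ (2 * (2 * r - 1)) + 1,
    add_pos_of_nonneg_of_pos (mul_nonneg hB ((even_two_mul _).pow_nonneg L)) one_pos, ?_⟩
  intro h hh _ x₀ j f hf k hk
  have he i (hi : i ∈ range r) := alphaW_sub_Copt_mem_Icc hh hf (mem_range.1 hi)
  have key := abs_div_sum_add_sub_le (fun i _ => Copt_nonneg r i) (sum_Copt (by omega))
    (fun i hi => (he i hi).1) (mem_range.2 hk)
  simp only [add_sub_cancel] at key
  calc |omegaW h x₀ j r f k - Copt r k|
      ≤ ∑ i ∈ range r, (alphaW h x₀ j r f i - Copt r i) := key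
    _ ≤ ∑ i ∈ range r, alphaCoeffSum r i * L ^ (2 * (2 * r - 1)) * h ^ (2 * r - 1) :=
        sum_le_sum fun i hi => (he i hi).2
    _ = B * L ^ (2 * (2 * r - 1)) * h ^ (2 * r - 1) := by rw [sum_mul, sum_mul]
    _ ≤ (B * L ^ (2 * (2 * r - 1)) + 1) * h ^ (2 * r - 1) := by gcongr; linarith

/-- Weight accuracy in smooth regions: if all consecutive differences are `O(h)`, then each
nonlinear weight equals the corresponding optimal weight up to `O(h^{2r-1})`. -/
theorem weights_smooth_accuracy (r : ℕ) (hr : 2 ≤ r) (L : ℝ) (hL : 0 ≤ L) :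
    ∃ M > 0, ∀ h : ℝ, 0 < h → h ≤ 1 → ∀ x₀ : ℝ, ∀ j : ℤ, ∀ f : ℝ → ℝ,
      (∀ ξ : ℤ, -(r : ℤ) + 1 ≤ ξ → ξ ≤ (r : ℤ) - 1 →
        |f (nd h x₀ (j + ξ)) - f (nd h x₀ (j + ξ - 1))| ≤ L * h) →
      ∀ k < r, |omegaW h x₀ j r f k - Copt r k| ≤ M * h ^ (2 * r - 1) :=
  weights_smooth_accuracy_general r L
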